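/- arXiv:2009.09431 — 2 statements merged into one kernel-verified Lean document; each statement's English description precedes it below -/
import Mathlib

section
/- For strictly positive densities p, q, any η with E_p[η] = 0 and any v with E_q[v] = 0, the duality relation E_q[(p/q)η · v] = E_p[η · (v - E_p[v])] holds; i.e., the mixture and exponential transports are adjoint with respect to the fiber inner products ⟨η, v⟩_q = E_q[ηv]. -/
open Real Finset

noncomputable def Ex {Ω : Type*} [Fintype Ω] (p f : Ω → ℝ) : ℝ :=
  (∑ x, f x * p x) / (Fintype.card Ω : ℝ)

theorem stmt5 {Ω : Type*} [Fintype Ω] [Nonempty Ω]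
    (p q : Ω → ℝ) (hp : ∀ x, 0 < p x) (hq : ∀ x, 0 < q x)
    (hpd : Ex p (fun _ => 1) = 1) (hqd : Ex q (fun _ => 1) = 1)
    (η v : Ω → ℝ) (hη : Ex p η = 0) (hv : Ex q v = 0) :
    Ex q (fun x => (p x / q x * η x) * v x) =
      Ex p (fun x => η x * (v x - Ex p v)) := by
  have hcard : (Fintype.card Ω : ℝ) ≠ 0 := by
    exact_mod_cast Fintype.card_ne_zero
  have hηsum : ∑ x, η x * p x = 0 := by
    have := hη
    unfold Ex at this
    field_simp at this
    simpa using this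
  unfold Ex
  congr 1
  have h1 : ∀ x, p x / q x * η x * v x * q x = η x * v x * p x := by
    intro x; field_simp [(hq x).ne']
  simp only [h1]
  have h3 : ∀ x, η x * (v x - Ex p v) * p x = η x * v x * p x - Ex p v * (η x * p x) := by
    intro x; ring
  symm
  calc ∑ x, η x * (v x - (∑ y, v y * p y) / (Fintype.card Ω : ℝ)) * p x
      = (∑ x, η x * v x * p x) - ((∑ y, v y * p y) / (Fintype.card Ω : ℝ)) * ∑ x, η x * p x := by
        rw [Finset.mul_sum, ← Finset.sum_sub_distrib]
        exact Finset.sum_congr rfl fun x _ => by ring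
    _ = ∑ x, η x * v x * p x := by rw [hηsum, mul_zero, sub_zero]
end

section
/- For a strictly positive density q, the fiber Legendre transform of the cumulant Lagrangian L_q(w) = K_q(w) = log E_q[e^w] on q-centered random variables is H_q(η) = E_q[(1+η)log(1+η)] for η > -1 with E_q[η]=0; that is, with η = e^{w - K_q(w)} - 1 it holds E_q[ηw] - K_q(w) = E_q[(1+η)log(1+η)]. -/
open Real Finset

noncomputable def Kp {Ω : Type*} [Fintype Ω] (p : Ω → ℝ) (u : Ω → ℝ) : ℝ :=
  Real.log (Ex p (fun x => Real.exp (u x)))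

/-! The identity is pointwise once `1 + η = e^{w - K}`: then `(1 + η) log (1 + η) = η w + w - K e^{w - K}`,
and taking expectations with `E_q[w] = 0` and `E_q[e^{w - K}] = 1` leaves `E_q[η w] - K`.
The normalisation `E_q[e^{w - K}] = 1` needs `E_q[e^w] > 0`, which follows from `e^w ≥ 1 + w`. -/

section Expectation

variable {Ω : Type*} [Fintype Ω] (p : Ω → ℝ)

theorem Ex_add (f g : Ω → ℝ) : Ex p (fun x => f x + g x) = Ex p f + Ex p g := by
  simp only [Ex, add_mul, sum_add_distrib, add_div]

theorem Ex_sub (f g : Ω → ℝ) : Ex p (fun x => f x - g x) = Ex p f - Ex p g := by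
  simp only [Ex, sub_mul, sum_sub_distrib, sub_div]

theorem Ex_const_mul (c : ℝ) (f : Ω → ℝ) : Ex p (fun x => c * f x) = c * Ex p f := by
  simp only [Ex, mul_assoc, ← mul_sum, mul_div_assoc]

variable {p}

theorem Ex_mono (hp : ∀ x, 0 ≤ p x) {f g : Ω → ℝ} (hfg : ∀ x, f x ≤ g x) : Ex p f ≤ Ex p g :=
  div_le_div_of_nonneg_right
    (sum_le_sum fun x _ => mul_le_mul_of_nonneg_right (hfg x) (hp x)) (Nat.cast_nonneg _)

theorem one_le_Ex_exp (hp : ∀ x, 0 ≤ p x) (hp1 : Ex p (fun _ => 1) = 1) {w : Ω → ℝ}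
    (hw : Ex p w = 0) : 1 ≤ Ex p (fun x => exp (w x)) := by
  calc 1 = Ex p (fun x => w x + 1) := by rw [Ex_add, hw, hp1, zero_add]
    _ ≤ Ex p (fun x => exp (w x)) := Ex_mono hp fun x => add_one_le_exp (w x)

theorem Ex_exp_sub_Kp {w : Ω → ℝ} (hpos : 0 < Ex p (fun x => exp (w x))) :
    Ex p (fun x => exp (w x - Kp p w)) = 1 := by
  have hK : exp (Kp p w) = Ex p (fun x => exp (w x)) := exp_log hpos
  simp only [exp_sub, div_eq_inv_mul]
  rw [Ex_const_mul, hK, inv_mul_cancel₀ hpos.ne']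

end Expectation

theorem stmt16_general {Ω : Type*} [Fintype Ω]
    (q : Ω → ℝ) (hq : ∀ x, 0 < q x) (hqd : Ex q (fun _ => 1) = 1)
    (w : Ω → ℝ) (hw : Ex q w = 0)
    (η : Ω → ℝ) (hη : ∀ x, η x = Real.exp (w x - Kp q w) - 1) :
    (∀ x, -1 < η x) ∧ Ex q η = 0 ∧
      Ex q (fun x => η x * w x) - Kp q w =
        Ex q (fun x => (1 + η x) * Real.log (1 + η x)) := by
  set K := Kp q w
  have hnorm : Ex q (fun x => exp (w x - K)) = 1 :=
    Ex_exp_sub_Kp (one_pos.trans_le (one_le_Ex_exp (fun x => (hq x).le) hqd hw))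
  have hη' : η = fun x => exp (w x - K) - 1 := funext hη
  have hentropy : (fun x => (1 + η x) * log (1 + η x))
      = fun x => (η x * w x + w x) - K * exp (w x - K) := by
    funext x
    rw [hη x, add_sub_cancel, log_exp]
    ring
  refine ⟨fun x => ?_, ?_, ?_⟩
  · rw [hη x]
    linarith [exp_pos (w x - K)]
  · rw [hη', Ex_sub, hnorm, hqd, sub_self]
  · rw [hentropy, Ex_sub, Ex_add, Ex_const_mul, hw, hnorm]
    ring

theorem stmt16 {Ω : Type*} [Fintype Ω] [Nonempty Ω]
    (q : Ω → ℝ) (hq : ∀ x, 0 < q x) (hqd : Ex q (fun _ => 1) = 1)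
    (w : Ω → ℝ) (hw : Ex q w = 0)
    (η : Ω → ℝ) (hη : ∀ x, η x = Real.exp (w x - Kp q w) - 1) :
    (∀ x, -1 < η x) ∧ Ex q η = 0 ∧
      Ex q (fun x => η x * w x) - Kp q w =
        Ex q (fun x => (1 + η x) * Real.log (1 + η x)) :=
  stmt16_general q hq hqd w hw η hη
end
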